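/- Let X be an essentially bounded random variable and h an 𝓗-measurable essentially bounded random variable. Then M(hX|𝓗) = h⁺·M(X|𝓗) − h⁻·m(X|𝓗) P-a.s., where h⁺ = max(h,0) and h⁻ = max(−h,0). -/

import Mathlib

open MeasureTheory Filter

/-- A real random variable is essentially bounded w.r.t. the measure `P`. -/
def EssBdd {Ω : Type*} {F : MeasurableSpace Ω} (P : @Measure Ω F) (X : Ω → ℝ) : Prop :=
  ∃ C : ℝ, ∀ᵐ ω ∂P, |X ω| ≤ C

/-- `Y` is the conditional essential supremum `M(X|H)` of `X` given the sub-σ-algebra `H`: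
`Y` is `H`-measurable, essentially bounded, `X ≤ Y` a.s., and `Y` is a.s. below every
`H`-measurable `Z` with `X ≤ Z` a.s. -/
def IsCondEssSup {Ω : Type*} {F : MeasurableSpace Ω} (P : @Measure Ω F)
    (H : MeasurableSpace Ω) (X Y : Ω → ℝ) : Prop :=
  Measurable[H] Y ∧ EssBdd P Y ∧ (∀ᵐ ω ∂P, X ω ≤ Y ω) ∧
    ∀ Z : Ω → ℝ, Measurable[H] Z → (∀ᵐ ω ∂P, X ω ≤ Z ω) → ∀ᵐ ω ∂P, Y ω ≤ Z ω

/-- `Y` is the conditional essential infimum `m(X|H) = -M(-X|H)`. -/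
def IsCondEssInf {Ω : Type*} {F : MeasurableSpace Ω} (P : @Measure Ω F)
    (H : MeasurableSpace Ω) (X Y : Ω → ℝ) : Prop :=
  IsCondEssSup P H (fun ω => -X ω) (fun ω => -Y ω)

/-! The bound `h X ≤ h⁺ M(X|𝓗) − h⁻ m(X|𝓗)` is immediate from `m(X|𝓗) ≤ X ≤ M(X|𝓗)`, so
minimality gives `M(hX|𝓗) ≤ h⁺ M(X|𝓗) − h⁻ m(X|𝓗)`. Conversely, minimality of `M(X|𝓗)` and
maximality of `m(X|𝓗)` localize to `𝓗`-measurable sets. On `{h > 0}` we have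
`X ≤ M(hX|𝓗) / h`, hence `h M(X|𝓗) ≤ M(hX|𝓗)`; on `{h < 0}` we have `M(hX|𝓗) / h ≤ X`,
hence `h m(X|𝓗) ≤ M(hX|𝓗)`; and on `{h = 0}` we have `0 = h X ≤ M(hX|𝓗)`. -/

section

variable {Ω : Type*} {F : MeasurableSpace Ω} {P : Measure Ω} {H : MeasurableSpace Ω}
  {X Y : Ω → ℝ}

namespace IsCondEssSup

theorem measurable (hY : IsCondEssSup P H X Y) : Measurable[H] Y := hY.1

theorem ae_le (hY : IsCondEssSup P H X Y) : ∀ᵐ ω ∂P, X ω ≤ Y ω := hY.2.2.1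

theorem ae_le_of_ae_le (hY : IsCondEssSup P H X Y) {Z : Ω → ℝ} (hZ : Measurable[H] Z)
    (hXZ : ∀ᵐ ω ∂P, X ω ≤ Z ω) : ∀ᵐ ω ∂P, Y ω ≤ Z ω :=
  hY.2.2.2 Z hZ hXZ

theorem ae_le_of_ae_le_on (hY : IsCondEssSup P H X Y) {S : Set Ω} (hS : MeasurableSet[H] S)
    {Z : Ω → ℝ} (hZ : Measurable[H] Z) (hXZ : ∀ᵐ ω ∂P, ω ∈ S → X ω ≤ Z ω) :
    ∀ᵐ ω ∂P, ω ∈ S → Y ω ≤ Z ω := by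
  classical
  -- Outside `S`, patch `Z` with `Y` itself to get a global `𝓗`-measurable upper bound of `X`.
  have hXle : ∀ᵐ ω ∂P, X ω ≤ S.piecewise Z Y ω := by
    filter_upwards [hXZ, hY.ae_le] with ω hZω hYω
    by_cases hω : ω ∈ S
    · simpa [hω] using hZω hω
    · simpa [hω] using hYω
  filter_upwards [hY.ae_le_of_ae_le (hZ.piecewise hS hY.measurable) hXle] with ω hω hωS
  simpa [hωS] using hω

theorem mul_ae_le_of_pos {h MhX : Ω → ℝ} (hY : IsCondEssSup P H X Y) (hm : Measurable[H] h)
    (hMhX : IsCondEssSup P H (fun ω => h ω * X ω) MhX) :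
    ∀ᵐ ω ∂P, 0 < h ω → h ω * Y ω ≤ MhX ω := by
  have hXle : ∀ᵐ ω ∂P, 0 < h ω → X ω ≤ MhX ω / h ω := by
    filter_upwards [hMhX.ae_le] with ω hω hpos
    rwa [le_div_iff₀ hpos, mul_comm]
  filter_upwards [hY.ae_le_of_ae_le_on (measurableSet_lt measurable_const hm)
    (hMhX.measurable.div hm) hXle] with ω hω hpos
  rw [mul_comm, ← le_div_iff₀ hpos]
  exact hω hpos

end IsCondEssSup

namespace IsCondEssInf

theorem measurable (hY : IsCondEssInf P H X Y) : Measurable[H] Y := by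
  simpa [Pi.neg_def] using IsCondEssSup.measurable hY |>.neg

theorem ae_le (hY : IsCondEssInf P H X Y) : ∀ᵐ ω ∂P, Y ω ≤ X ω := by
  filter_upwards [IsCondEssSup.ae_le hY] with ω hω
  exact neg_le_neg_iff.mp hω

theorem ae_le_of_ae_le_on (hY : IsCondEssInf P H X Y) {S : Set Ω} (hS : MeasurableSet[H] S)
    {Z : Ω → ℝ} (hZ : Measurable[H] Z) (hZX : ∀ᵐ ω ∂P, ω ∈ S → Z ω ≤ X ω) :
    ∀ᵐ ω ∂P, ω ∈ S → Z ω ≤ Y ω := by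
  have hneg : ∀ᵐ ω ∂P, ω ∈ S → -X ω ≤ -Z ω := by
    filter_upwards [hZX] with ω hω hωS
    exact neg_le_neg (hω hωS)
  filter_upwards [IsCondEssSup.ae_le_of_ae_le_on hY hS hZ.neg hneg] with ω hω hωS
  exact neg_le_neg_iff.mp (hω hωS)

theorem mul_ae_le_of_neg {h MhX : Ω → ℝ} (hY : IsCondEssInf P H X Y) (hm : Measurable[H] h)
    (hMhX : IsCondEssSup P H (fun ω => h ω * X ω) MhX) :
    ∀ᵐ ω ∂P, h ω < 0 → h ω * Y ω ≤ MhX ω := by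
  have hleX : ∀ᵐ ω ∂P, h ω < 0 → MhX ω / h ω ≤ X ω := by
    filter_upwards [hMhX.ae_le] with ω hω hneg
    rwa [div_le_iff_of_neg hneg, mul_comm]
  filter_upwards [hY.ae_le_of_ae_le_on (measurableSet_lt hm measurable_const)
    (hMhX.measurable.div hm) hleX] with ω hω hneg
  rw [mul_comm, ← div_le_iff_of_neg hneg]
  exact hω hneg

end IsCondEssInf

theorem mul_le_max_mul_sub_max_neg_mul {h x m M : ℝ} (hm : m ≤ x) (hM : x ≤ M) :
    h * x ≤ max h 0 * M - max (-h) 0 * m := by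
  rcases le_or_gt 0 h with hh | hh
  · rw [max_eq_left hh, max_eq_right (by linarith)]
    nlinarith
  · rw [max_eq_right hh.le, max_eq_left (by linarith)]
    nlinarith

theorem max_mul_sub_max_neg_mul_le {h y m M : ℝ} (hpos : 0 < h → h * M ≤ y)
    (hneg : h < 0 → h * m ≤ y) (hzero : h = 0 → 0 ≤ y) :
    max h 0 * M - max (-h) 0 * m ≤ y := by
  rcases lt_trichotomy h 0 with hh | hh | hh
  · rw [max_eq_right hh.le, max_eq_left (by linarith)]
    linarith [hneg hh]
  · simpa [hh] using hzero hh
  · rw [max_eq_left hh.le, max_eq_right (by linarith)]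
    linarith [hpos hh]

end

theorem condEssSup_mul_measurable_signed_general {Ω : Type*} [F : MeasurableSpace Ω]
    (P : Measure Ω) (H : MeasurableSpace Ω)
    (X h MX mX MhX : Ω → ℝ)
    (hm : Measurable[H] h)
    (hMX : IsCondEssSup P H X MX) (hmX : IsCondEssInf P H X mX)
    (hMhX : IsCondEssSup P H (fun ω => h ω * X ω) MhX) :
    MhX =ᵐ[P] fun ω => max (h ω) 0 * MX ω - max (-h ω) 0 * mX ω := by
  have hmeas : Measurable[H] fun ω => max (h ω) 0 * MX ω - max (-h ω) 0 * mX ω :=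
    ((hm.max measurable_const).mul hMX.measurable).sub
      ((hm.neg.max measurable_const).mul hmX.measurable)
  have hupper := hMhX.ae_le_of_ae_le hmeas <| by
    filter_upwards [hmX.ae_le, hMX.ae_le] with ω hmω hMω
    exact mul_le_max_mul_sub_max_neg_mul hmω hMω
  filter_upwards [hupper, hMX.mul_ae_le_of_pos hm hMhX, hmX.mul_ae_le_of_neg hm hMhX,
    hMhX.ae_le] with ω hle hpos hneg hzero
  refine le_antisymm hle (max_mul_sub_max_neg_mul_le hpos hneg fun h0 => ?_)
  simpa [h0] using hzero

/-- For `H`-measurable essentially bounded `h`,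
`M(hX|H) = h⁺ · M(X|H) − h⁻ · m(X|H)` a.s. -/
theorem condEssSup_mul_measurable_signed {Ω : Type*} [F : MeasurableSpace Ω]
    (P : Measure Ω) [IsProbabilityMeasure P] (H : MeasurableSpace Ω) (hH : H ≤ F)
    (X h MX mX MhX : Ω → ℝ) (hX : EssBdd P X) (hb : EssBdd P h)
    (hm : Measurable[H] h)
    (hMX : IsCondEssSup P H X MX) (hmX : IsCondEssInf P H X mX)
    (hMhX : IsCondEssSup P H (fun ω => h ω * X ω) MhX) :
    MhX =ᵐ[P] fun ω => max (h ω) 0 * MX ω - max (-h ω) 0 * mX ω :=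
  condEssSup_mul_measurable_signed_general (F := F) P H X h MX mX MhX hm hMX hmX hMhX
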